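/- The γ-relation of the λ^q-calculus is Church-Rosser: for λ^q-terms M, R, S, if M ↠_γ R and M ↠_γ S, then there exists a λ^q-term T such that R ↠_γ T and S ↠_γ T. -/

import Mathlib

/-- Signs (phases) of the λ^q-calculus. -/
inductive Sign : Type
  | pos : Sign
  | neg : Sign
deriving DecidableEq

/-- λ^q-terms: M ::= Sx | M₁ M₂ | Sλx.M | (M₁, M₂), where S ∈ {+,−} is a
sign, over a countably infinite set of variables. -/
inductive QTerm : Type
  | var : Sign → ℕ → QTerm
  | app : QTerm → QTerm → QTerm
  | lam : Sign → ℕ → QTerm → QTerm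
  | coll : QTerm → QTerm → QTerm

/-- The congruence on λ^q-terms generated by (ClnOrd) M,N ≡ N,M and
(ClnNest) (M,N),P ≡ M,(N,P). -/
inductive CongQ : QTerm → QTerm → Prop
  | refl (M : QTerm) : CongQ M M
  | symm {M N : QTerm} : CongQ M N → CongQ N M
  | trans {M N P : QTerm} : CongQ M N → CongQ N P → CongQ M P
  | app {M M' N N' : QTerm} : CongQ M M' → CongQ N N' → CongQ (.app M N) (.app M' N')
  | lam (s : Sign) (x : ℕ) {M M' : QTerm} : CongQ M M' → CongQ (.lam s x M) (.lam s x M')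
  | coll {M M' N N' : QTerm} : CongQ M M' → CongQ N N' → CongQ (.coll M N) (.coll M' N')
  | ord (M N : QTerm) : CongQ (.coll M N) (.coll N M)
  | nest (M N P : QTerm) : CongQ (.coll (.coll M N) P) (.coll M (.coll N P))

/-- `collOf M [N₁,…,Nₖ]` is the right-associated collection `(M, N₁, …, Nₖ)`. -/
def collOf : QTerm → List QTerm → QTerm
  | M, [] => M
  | M, N :: L => .coll M (collOf N L)

/-- A term is a collection if its outermost constructor is the comma. -/
def IsColl : QTerm → Prop
  | .coll _ _ => True
  | _ => False

/-- The γ-relation of the λ^q-calculus: it relates each application P Q, where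
P is congruent to a collection (M₀,…,M_m) and Q to a collection (N₀,…,N_n)
with at least one of them a proper (more-than-one-element) collection, to the
collection of all applications M_i N_j. -/
inductive GammaQ : QTerm → QTerm → Prop
  | mk (P Q M N : QTerm) (Ms Ns : List QTerm)
      (hP : CongQ P (collOf M Ms)) (hQ : CongQ Q (collOf N Ns))
      (hn : Ms ≠ [] ∨ Ns ≠ []) :
      GammaQ (.app P Q)
        (collOf (.app M N)
          (Ns.map (.app M) ++ Ms.flatMap fun Mi => (N :: Ns).map (.app Mi)))

/-- One-step γ-reduction: the compatible closure of the γ-relation. -/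
inductive StepGQ : QTerm → QTerm → Prop
  | gamma {M N : QTerm} : GammaQ M N → StepGQ M N
  | appL {M M' N : QTerm} : StepGQ M M' → StepGQ (.app M N) (.app M' N)
  | appR {M N N' : QTerm} : StepGQ N N' → StepGQ (.app M N) (.app M N')
  | lam (s : Sign) (x : ℕ) {M M' : QTerm} : StepGQ M M' → StepGQ (.lam s x M) (.lam s x M')
  | collL {M M' N : QTerm} : StepGQ M M' → StepGQ (.coll M N) (.coll M' N)
  | collR {M N N' : QTerm} : StepGQ N N' → StepGQ (.coll M N) (.coll M N')

/-- γ-reduction ↠_γ : the reflexive-transitive closure of one-step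
γ-reduction, on terms considered up to the congruence generated by
(ClnOrd) and (ClnNest). -/
def RedGQ : QTerm → QTerm → Prop :=
  Relation.ReflTransGen (fun M N => StepGQ M N ∨ CongQ M N)

/-- A term is in γ-normal form if it contains no γ-redex. -/
def NoGammaRedexQ : QTerm → Prop
  | .var _ _ => True
  | .lam _ _ M => NoGammaRedexQ M
  | .app P Q => ¬ IsColl P ∧ ¬ IsColl Q ∧ NoGammaRedexQ P ∧ NoGammaRedexQ Q
  | .coll P Q => NoGammaRedexQ P ∧ NoGammaRedexQ Q

/-!
Distributing every application over the collections in its two sides yields a γ-normal form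
`nf M` with `M ↠_γ nf M`. Up to ≡, a term is determined by the multiset of congruence classes of
the members of its top-level collection (`spine`), and the spine of `nf M` is unchanged by a
γ-step or by ≡: the γ-relation only reorganises the same products `Mᵢ Nⱼ`. Hence all reducts of
`M` have normal forms congruent to `nf M`, which is therefore a common reduct.
-/

namespace QTerm

def members : QTerm → List QTerm
  | .coll a b => members a ++ members b
  | t => [t]

/-- `ofList []` is a junk value. -/
def ofList : List QTerm → QTerm
  | [] => .var .pos 0
  | a :: l => collOf a l

lemma ofList_cons_cons (a b : QTerm) (l : List QTerm) :
    ofList (a :: b :: l) = .coll a (ofList (b :: l)) := rfl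

lemma members_ne_nil : ∀ t : QTerm, members t ≠ []
  | .coll a _ => by simp [members, members_ne_nil a]
  | .var _ _ | .app _ _ | .lam _ _ _ => List.cons_ne_nil _ _

lemma eq_of_members_eq_singleton {t a : QTerm} (h : members t = [a]) : t = a := by
  cases t with
  | coll x y =>
    have := congrArg List.length h
    simp only [members, List.length_append, List.length_singleton] at this
    have := List.length_pos_iff.mpr (members_ne_nil x)
    have := List.length_pos_iff.mpr (members_ne_nil y)
    omega
  | _ => simpa [members] using h

lemma members_ofList : ∀ {l : List QTerm}, l ≠ [] → members (ofList l) = l.flatMap members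
  | [a], _ => by simp [ofList, collOf]
  | a :: b :: l, _ => by
    rw [ofList_cons_cons, members, members_ofList (List.cons_ne_nil b l)]
    simp

lemma congQ_ofList_append : ∀ {l₁ l₂ : List QTerm}, l₁ ≠ [] → l₂ ≠ [] →
    CongQ (ofList (l₁ ++ l₂)) (.coll (ofList l₁) (ofList l₂))
  | [a], b :: l₂, _, _ => by cases l₂ <;> exact CongQ.refl _
  | a :: c :: l₁, l₂, _, h₂ => by
    rw [List.cons_append, List.cons_append, ofList_cons_cons, ← List.cons_append, ofList_cons_cons]
    exact (CongQ.coll (CongQ.refl a) (congQ_ofList_append (List.cons_ne_nil c l₁) h₂)).trans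
      (CongQ.nest _ _ _).symm

lemma congQ_ofList_members : ∀ t : QTerm, CongQ t (ofList (members t))
  | .coll a b =>
    (CongQ.coll (congQ_ofList_members a) (congQ_ofList_members b)).trans
      (congQ_ofList_append (members_ne_nil a) (members_ne_nil b)).symm
  | .var _ _ | .app _ _ | .lam _ _ _ => CongQ.refl _

lemma congQ_ofList_of_perm {l l' : List QTerm} (h : l.Perm l') : CongQ (ofList l) (ofList l') := by
  induction h with
  | nil => exact CongQ.refl _
  | @cons x l₁ l₂ h ih =>
    rcases l₁ with _ | ⟨b, l₁⟩
    · rw [h.nil_eq]; exact CongQ.refl _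
    rcases l₂ with _ | ⟨c, l₂⟩
    · exact absurd h.eq_nil (List.cons_ne_nil b l₁)
    rw [ofList_cons_cons, ofList_cons_cons]
    exact CongQ.coll (CongQ.refl x) ih
  | swap x y l =>
    rcases l with _ | ⟨c, l⟩
    · exact CongQ.ord y x
    simp only [ofList_cons_cons]
    exact (CongQ.nest _ _ _).symm.trans
      ((CongQ.coll (CongQ.ord y x) (CongQ.refl _)).trans (CongQ.nest _ _ _))
  | trans _ _ ih₁ ih₂ => exact ih₁.trans ih₂

instance congSetoid : Setoid QTerm := ⟨CongQ, ⟨CongQ.refl, CongQ.symm, CongQ.trans⟩⟩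

def spine (t : QTerm) : Multiset (Quotient congSetoid) :=
  ((members t).map (⟦·⟧) : List (Quotient congSetoid))

lemma spine_coll (a b : QTerm) : spine (.coll a b) = spine a + spine b := by
  simp [spine, members]

lemma spine_app (a b : QTerm) : spine (.app a b) = {⟦.app a b⟧} := rfl

lemma spine_lam (s : Sign) (x : ℕ) (M : QTerm) : spine (.lam s x M) = {⟦.lam s x M⟧} := rfl

lemma spine_eq_of_congQ {A B : QTerm} (h : CongQ A B) : spine A = spine B := by
  induction h with
  | refl => rfl
  | symm _ ih => exact ih.symm
  | trans _ _ ih₁ ih₂ => exact ih₁.trans ih₂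
  | app h₁ h₂ =>
    rw [spine_app, spine_app, Quotient.sound (CongQ.app h₁ h₂)]
  | lam s x h =>
    rw [spine_lam, spine_lam, Quotient.sound (CongQ.lam s x h)]
  | coll _ _ ih₁ ih₂ => rw [spine_coll, spine_coll, ih₁, ih₂]
  | ord => simp only [spine_coll, add_comm]
  | nest => simp only [spine_coll, add_assoc]

lemma congQ_ofList_of_perm_map : ∀ {l l' : List QTerm}, l ≠ [] →
    (l.map (⟦·⟧ : QTerm → Quotient congSetoid)).Perm (l'.map (⟦·⟧)) →
    CongQ (ofList l) (ofList l')
  | a :: l, l', _, h => by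
    obtain ⟨b, hb, hab⟩ : ∃ b ∈ l', (⟦b⟧ : Quotient congSetoid) = ⟦a⟧ :=
      List.mem_map.mp (h.subset List.mem_cons_self)
    obtain ⟨s, t, rfl⟩ := List.append_of_mem hb
    have hl' : (s ++ b :: t).Perm (b :: (s ++ t)) := List.perm_middle
    have hrest : (l.map (⟦·⟧ : QTerm → Quotient congSetoid)).Perm ((s ++ t).map (⟦·⟧)) := by
      have := h.trans (hl'.map _)
      rw [List.map_cons, List.map_cons, hab] at this
      exact this.cons_inv
    refine CongQ.trans ?_ (congQ_ofList_of_perm hl'.symm)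
    rcases l with _ | ⟨c, l⟩
    · rw [List.eq_nil_of_map_eq_nil hrest.nil_eq.symm]
      exact Quotient.exact hab.symm
    obtain ⟨d, l'', hd⟩ := List.exists_cons_of_ne_nil
      (fun he : s ++ t = [] => by simp [he] at hrest)
    rw [ofList_cons_cons, hd, ofList_cons_cons, ← hd]
    exact CongQ.coll (Quotient.exact hab.symm) (congQ_ofList_of_perm_map (List.cons_ne_nil c l) hrest)

lemma congQ_iff_spine_eq {A B : QTerm} : CongQ A B ↔ spine A = spine B := by
  refine ⟨spine_eq_of_congQ, fun h => ?_⟩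
  have hperm := Multiset.coe_eq_coe.mp h
  exact (congQ_ofList_members A).trans
    ((congQ_ofList_of_perm_map (members_ne_nil A) hperm).trans (congQ_ofList_members B).symm)

def appClass : Quotient congSetoid → Quotient congSetoid → Quotient congSetoid :=
  Quotient.map₂ QTerm.app fun _ _ h₁ _ _ h₂ => CongQ.app h₁ h₂

def appSpine (s t : Multiset (Quotient congSetoid)) : Multiset (Quotient congSetoid) :=
  s.bind fun a => t.map (appClass a)

lemma appSpine_bind {α β : Type*} (s : Multiset α) (t : Multiset β)
    (f : α → Multiset (Quotient congSetoid)) (g : β → Multiset (Quotient congSetoid)) :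
    appSpine (s.bind f) (t.bind g) = s.bind fun a => t.bind fun b => appSpine (f a) (g b) := by
  simp only [appSpine, Multiset.bind_assoc, Multiset.map_bind]
  exact congrArg s.bind (funext fun a => Multiset.bind_bind _ _)

def appList (l₁ l₂ : List QTerm) : List QTerm :=
  l₁.flatMap fun a => l₂.map (.app a)

lemma appList_ne_nil {l₁ l₂ : List QTerm} (h₁ : l₁ ≠ []) (h₂ : l₂ ≠ []) :
    appList l₁ l₂ ≠ [] := by
  obtain ⟨a, l₁, rfl⟩ := List.exists_cons_of_ne_nil h₁
  obtain ⟨b, l₂, rfl⟩ := List.exists_cons_of_ne_nil h₂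
  simp [appList]

lemma gamma_target_eq_ofList_appList (M N : QTerm) (Ms Ns : List QTerm) :
    collOf (.app M N) (Ns.map (.app M) ++ Ms.flatMap fun Mi => (N :: Ns).map (.app Mi)) =
      ofList (appList (M :: Ms) (N :: Ns)) := by
  simp [appList, ofList]

lemma coe_appList_bind {β : Type*} (l₁ l₂ : List QTerm) (f : QTerm → Multiset β) :
    (appList l₁ l₂ : Multiset QTerm).bind f =
      (l₁ : Multiset QTerm).bind fun a => (l₂ : Multiset QTerm).bind fun b => f (.app a b) := by
  simp only [appList, ← Multiset.coe_bind, Multiset.bind_assoc, ← Multiset.map_coe,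
    Multiset.bind_map]

lemma spine_ofList {l : List QTerm} (h : l ≠ []) :
    spine (ofList l) = (l : Multiset QTerm).bind spine := by
  simp only [spine, members_ofList h, List.map_flatMap, ← Multiset.coe_bind]
  rfl

def nf : QTerm → QTerm
  | .var s x => .var s x
  | .lam s x m => .lam s x (nf m)
  | .coll a b => .coll (nf a) (nf b)
  | .app p q => ofList (appList (members (nf p)) (members (nf q)))

lemma spine_nf_app (p q : QTerm) :
    spine (nf (.app p q)) = appSpine (spine (nf p)) (spine (nf q)) := by
  rw [nf, spine_ofList (appList_ne_nil (members_ne_nil _) (members_ne_nil _)), coe_appList_bind]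
  simp only [spine_app, Multiset.bind_singleton]
  simp only [spine, appSpine, ← Multiset.map_coe, Multiset.bind_map, Multiset.map_map]
  rfl

lemma nf_ofList : ∀ {l : List QTerm}, l ≠ [] → nf (ofList l) = ofList (l.map nf)
  | [a], _ => rfl
  | a :: b :: l, _ => by
    rw [ofList_cons_cons, nf, nf_ofList (List.cons_ne_nil b l)]
    rfl

lemma spine_nf_ofList {l : List QTerm} (h : l ≠ []) :
    spine (nf (ofList l)) = (l : Multiset QTerm).bind (fun t => spine (nf t)) := by
  rw [nf_ofList h, spine_ofList (by simpa using h), ← Multiset.map_coe, Multiset.bind_map]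

lemma spine_nf_lam_congr (s : Sign) (x : ℕ) {M M' : QTerm} (h : spine (nf M) = spine (nf M')) :
    spine (nf (.lam s x M)) = spine (nf (.lam s x M')) := by
  simp only [nf]
  rw [spine_lam, spine_lam, Quotient.sound (CongQ.lam s x (congQ_iff_spine_eq.mpr h))]

lemma spine_nf_coll (a b : QTerm) : spine (nf (.coll a b)) = spine (nf a) + spine (nf b) :=
  spine_coll _ _

lemma spine_nf_eq_of_congQ {A B : QTerm} (h : CongQ A B) : spine (nf A) = spine (nf B) := by
  induction h with
  | refl => rfl
  | symm _ ih => exact ih.symm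
  | trans _ _ ih₁ ih₂ => exact ih₁.trans ih₂
  | app _ _ ih₁ ih₂ => rw [spine_nf_app, spine_nf_app, ih₁, ih₂]
  | lam s x _ ih => exact spine_nf_lam_congr s x ih
  | coll _ _ ih₁ ih₂ => rw [spine_nf_coll, spine_nf_coll, ih₁, ih₂]
  | ord => simp only [spine_nf_coll, add_comm]
  | nest => simp only [spine_nf_coll, add_assoc]

lemma spine_nf_eq_of_gammaQ {A B : QTerm} (h : GammaQ A B) : spine (nf A) = spine (nf B) := by
  obtain ⟨P, Q, M, N, Ms, Ns, hP, hQ, -⟩ := h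
  have hMs : (M :: Ms) ≠ [] := List.cons_ne_nil M Ms
  have hNs : (N :: Ns) ≠ [] := List.cons_ne_nil N Ns
  rw [gamma_target_eq_ofList_appList, spine_nf_app, spine_nf_eq_of_congQ hP,
    spine_nf_eq_of_congQ hQ, ← ofList, ← ofList, spine_nf_ofList hMs, spine_nf_ofList hNs,
    spine_nf_ofList (appList_ne_nil hMs hNs), appSpine_bind, coe_appList_bind]
  simp only [spine_nf_app]

lemma spine_nf_eq_of_stepGQ {A B : QTerm} (h : StepGQ A B) : spine (nf A) = spine (nf B) := by
  induction h with
  | gamma h => exact spine_nf_eq_of_gammaQ h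
  | appL _ ih => rw [spine_nf_app, spine_nf_app, ih]
  | appR _ ih => rw [spine_nf_app, spine_nf_app, ih]
  | lam s x _ ih => exact spine_nf_lam_congr s x ih
  | collL _ ih => rw [spine_nf_coll, spine_nf_coll, ih]
  | collR _ ih => rw [spine_nf_coll, spine_nf_coll, ih]

end QTerm

namespace RedGQ

lemma map (f : QTerm → QTerm) (hstep : ∀ {a b}, StepGQ a b → StepGQ (f a) (f b))
    (hcong : ∀ {a b}, CongQ a b → CongQ (f a) (f b)) {a b : QTerm} (h : RedGQ a b) :
    RedGQ (f a) (f b) :=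
  Relation.ReflTransGen.lift f (fun _ _ h => h.imp hstep hcong) _ _ h

lemma app {P P' Q Q' : QTerm} (hP : RedGQ P P') (hQ : RedGQ Q Q') :
    RedGQ (.app P Q) (.app P' Q') :=
  (hP.map (.app · Q) .appL (CongQ.app · (.refl Q))).trans
    (hQ.map (.app P') .appR (CongQ.app (.refl P')))

lemma coll {P P' Q Q' : QTerm} (hP : RedGQ P P') (hQ : RedGQ Q Q') :
    RedGQ (.coll P Q) (.coll P' Q') :=
  (hP.map (.coll · Q) .collL (CongQ.coll · (.refl Q))).trans
    (hQ.map (.coll P') .collR (CongQ.coll (.refl P')))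

lemma lam (s : Sign) (x : ℕ) {M M' : QTerm} (h : RedGQ M M') :
    RedGQ (.lam s x M) (.lam s x M') :=
  h.map (.lam s x) (.lam s x) (.lam s x)

end RedGQ

namespace QTerm

lemma redGQ_app_ofList_appList (P Q : QTerm) :
    RedGQ (.app P Q) (ofList (appList (members P) (members Q))) := by
  obtain ⟨M, Ms, hP⟩ := List.exists_cons_of_ne_nil (members_ne_nil P)
  obtain ⟨N, Ns, hQ⟩ := List.exists_cons_of_ne_nil (members_ne_nil Q)
  rw [hP, hQ]
  by_cases hn : Ms ≠ [] ∨ Ns ≠ []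
  · have hPM : CongQ P (ofList (M :: Ms)) := hP ▸ congQ_ofList_members P
    have hQN : CongQ Q (ofList (N :: Ns)) := hQ ▸ congQ_ofList_members Q
    rw [← gamma_target_eq_ofList_appList]
    exact .single (.inl (.gamma (.mk P Q M N Ms Ns hPM hQN hn)))
  · obtain ⟨rfl, rfl⟩ : Ms = [] ∧ Ns = [] := by simpa using hn
    rw [eq_of_members_eq_singleton hP, eq_of_members_eq_singleton hQ]
    exact .refl

lemma redGQ_nf : ∀ M : QTerm, RedGQ M (nf M)
  | .var _ _ => .refl
  | .lam s x M => (redGQ_nf M).lam s x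
  | .coll a b => (redGQ_nf a).coll (redGQ_nf b)
  | .app p q => ((redGQ_nf p).app (redGQ_nf q)).trans (redGQ_app_ofList_appList _ _)

lemma congQ_nf_of_redGQ {M R : QTerm} (h : RedGQ M R) : CongQ (nf M) (nf R) := by
  induction h with
  | refl => exact .refl _
  | tail _ hstep ih =>
    exact ih.trans (congQ_iff_spine_eq.mpr (hstep.elim spine_nf_eq_of_stepGQ spine_nf_eq_of_congQ))

end QTerm

/-- The γ-relation of the λ^q-calculus is Church-Rosser: for λ^q-terms
M, R, S, if M ↠_γ R and M ↠_γ S, then there exists a λ^q-term T such that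
R ↠_γ T and S ↠_γ T. -/
theorem gammaQ_church_rosser (M R S : QTerm) (hR : RedGQ M R) (hS : RedGQ M S) :
    ∃ T : QTerm, RedGQ R T ∧ RedGQ S T :=
  ⟨M.nf, R.redGQ_nf.tail (.inr (QTerm.congQ_nf_of_redGQ hR).symm),
    S.redGQ_nf.tail (.inr (QTerm.congQ_nf_of_redGQ hS).symm)⟩
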